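/- Let p ∈ U and let m denote the number of equivalence classes of the relation ∼_p on V (one always has m ≥ 2). Then the dimension of the affine span of the open cell C(p) equals m − 2; that is, the rank of the ℝ-vector space spanned by the differences of points of C(p) is m − 2. -/

import Mathlib

open Finset

/-- The vertex-induced subgraph on `S` of the multigraph with edge-multiplicity
function `μ` is connected: any two vertices of `S` are joined by a walk inside `S`. -/
def ConnectedOn {n : ℕ} (μ : Fin (n + 1) → Fin (n + 1) → ℕ) (S : Set (Fin (n + 1))) : Prop :=
  ∀ i ∈ S, ∀ j ∈ S, Relation.ReflTransGen (fun a b => a ∈ S ∧ b ∈ S ∧ 1 ≤ μ a b) i j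

/-- The affine subspace `U = { x ∈ ℝ^{n+1} : x_{n+1} = 0, x_1 + ⋯ + x_n = 1 }`. -/
def U (n : ℕ) : Set (Fin (n + 1) → ℝ) :=
  {x | x (Fin.last n) = 0 ∧ ∑ i : Fin n, x i.castSucc = 1}

/-- The open cell of `p` in the restriction of the graphical arrangement of `μ` to `U`. -/
def openCell {n : ℕ} (μ : Fin (n + 1) → Fin (n + 1) → ℕ) (p : Fin (n + 1) → ℝ) :
    Set (Fin (n + 1) → ℝ) :=
  {q | q ∈ U n ∧ ∀ i j, 1 ≤ μ i j →
    ((q i < q j ↔ p i < p j) ∧ (q i = q j ↔ p i = p j))}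

/-- The closed cell of `p` in the restriction of the graphical arrangement of `μ` to `U`. -/
def closedCell {n : ℕ} (μ : Fin (n + 1) → Fin (n + 1) → ℕ) (p : Fin (n + 1) → ℝ) :
    Set (Fin (n + 1) → ℝ) :=
  {q | q ∈ U n ∧ ∀ i j, 1 ≤ μ i j →
    ((p i < p j → q i ≤ q j) ∧ (p i = p j → q i = q j))}

/-- `p`-equivalence: `i ∼_p j` iff there is a path in the graph along which `p` is constant. -/
def pEquiv {n : ℕ} (μ : Fin (n + 1) → Fin (n + 1) → ℕ) (p : Fin (n + 1) → ℝ)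
    (i j : Fin (n + 1)) : Prop :=
  Relation.ReflTransGen (fun a b => 1 ≤ μ a b ∧ p a = p b) i j

/-- `d_I(i)`: the number of edges from vertex `i` to the complement of `I`. -/
def dI {n : ℕ} (μ : Fin (n + 1) → Fin (n + 1) → ℕ) (I : Finset (Fin (n + 1)))
    (i : Fin (n + 1)) : ℕ :=
  ∑ j ∈ Iᶜ, μ i j

/-- `ε_I(i) = d_I(i)` for `i ∈ I` and `0` otherwise. -/
def epsI {n : ℕ} (μ : Fin (n + 1) → Fin (n + 1) → ℕ) (I : Finset (Fin (n + 1)))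
    (i : Fin (n + 1)) : ℕ :=
  if i ∈ I then dI μ I i else 0

/-- The point `(1/|I|) · e_I`, where `e_I` is the 0/1 indicator vector of `I`. -/
noncomputable def qI {n : ℕ} (I : Finset (Fin (n + 1))) : Fin (n + 1) → ℝ :=
  fun i => if i ∈ I then 1 / (I.card : ℝ) else 0

/-- `D_i(p)`: the number of edges `ij` with `p_i > p_j`. -/
noncomputable def Dlab {n : ℕ} (μ : Fin (n + 1) → Fin (n + 1) → ℕ) (p : Fin (n + 1) → ℝ) (i : Fin n) : ℕ :=
  ∑ j ∈ Finset.univ.filter (fun j => p j < p i.castSucc), μ i.castSucc j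

/-- The monomial `m_I = ∏_{i ∈ [n]} x_i^{ε_I(i)}`. -/
noncomputable def mI {n : ℕ} (k : Type*) [Field k] (μ : Fin (n + 1) → Fin (n + 1) → ℕ)
    (I : Finset (Fin (n + 1))) : MvPolynomial (Fin n) k :=
  ∏ i : Fin n, MvPolynomial.X i ^ epsI μ I i.castSucc

/-- The monomial ideal `M_G = ⟨ m_I : ∅ ≠ I ⊆ [n] ⟩`. -/
noncomputable def MG {n : ℕ} (k : Type*) [Field k] (μ : Fin (n + 1) → Fin (n + 1) → ℕ) :
    Ideal (MvPolynomial (Fin n) k) :=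
  Ideal.span {f | ∃ I : Finset (Fin (n + 1)), I.Nonempty ∧ Fin.last n ∉ I ∧ f = mI k μ I}

/-!
The direction space of `C(p)` consists of the vectors `v` that are constant on `∼_p`-classes and
satisfy the two homogeneous equations of `U`: such a `v` preserves the equalities along edges,
and strict inequalities survive the small perturbation `p + ε • v`. Vectors constant on classes
are functions on the `m` classes, and the two equations (`v` vanishes on the class of `n + 1`,
`∑ v = 0`) are independent because the class of `n + 1`, where `p = 0`, differs from the class
of some `i ≤ n` with `p i ≠ 0`.
-/

open Filter Topology

theorem lt_iff_lt_and_eq_iff_eq_of_imp {α β : Type*} [LinearOrder α] [LinearOrder β]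
    {a b : α} {c d : β} (hlt : a < b → c < d) (hgt : b < a → d < c) (heq : a = b → c = d) :
    (c < d ↔ a < b) ∧ (c = d ↔ a = b) := by
  rcases lt_trichotomy a b with h | h | h
  · exact ⟨iff_of_true (hlt h) h, iff_of_false (hlt h).ne h.ne⟩
  · exact ⟨iff_of_false (heq h).not_lt h.not_lt, iff_of_true (heq h) h⟩
  · exact ⟨iff_of_false (hgt h).not_gt h.not_gt, iff_of_false (hgt h).ne' h.ne'⟩

theorem exists_pos_forall_lt_imp_add_mul_lt {ι : Type*} [Finite ι] (p v : ι → ℝ) :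
    ∃ ε : ℝ, 0 < ε ∧ ∀ i j, p i < p j → p i + ε * v i < p j + ε * v j := by
  have hnear : ∀ᶠ ε in 𝓝 (0 : ℝ), ∀ i j, p i < p j → p i + ε * v i < p j + ε * v j := by
    simp only [eventually_all]
    intro i j hij
    exact ContinuousAt.eventually_lt (by fun_prop) (by fun_prop) (by simpa using hij)
  obtain ⟨ε, hε, hpos⟩ :=
    ((hnear.filter_mono nhdsWithin_le_nhds).and (self_mem_nhdsWithin (s := Set.Ioi 0))).exists
  exact ⟨ε, hpos, hε⟩

section ConstAlong

variable (R M : Type*) [Semiring R] [AddCommMonoid M] [Module R M] {ι : Type*}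

def constAlong (r : ι → ι → Prop) : Submodule R (ι → M) where
  carrier := {v | ∀ i j, r i j → v i = v j}
  add_mem' hv hw i j h := by simp only [Pi.add_apply, hv i j h, hw i j h]
  zero_mem' _ _ _ := rfl
  smul_mem' c _ hv i j h := by simp only [Pi.smul_apply, hv i j h]

variable {R M}

@[simp]
theorem mem_constAlong {r : ι → ι → Prop} {v : ι → M} :
    v ∈ constAlong R M r ↔ ∀ i j, r i j → v i = v j := Iff.rfl

theorem range_funLeft_quotient_mk (s : Setoid ι) :
    LinearMap.range (LinearMap.funLeft R M (Quotient.mk s)) = constAlong R M s := by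
  ext v
  constructor
  · rintro ⟨f, rfl⟩ i j h
    simp only [LinearMap.funLeft_apply, Quotient.sound h]
  · intro hv
    exact ⟨Quotient.lift v hv, rfl⟩

end ConstAlong

theorem finrank_constAlong_inf_ker {K ι V : Type*} [Field K] [Finite ι] [AddCommGroup V]
    [Module K V] (s : Setoid ι) (L : (ι → K) →ₗ[K] V) :
    Module.finrank K (constAlong K K s ⊓ LinearMap.ker L : Submodule K (ι → K)) =
      Module.finrank K (LinearMap.ker (L ∘ₗ LinearMap.funLeft K K (Quotient.mk s))) := by
  have hinj := LinearMap.funLeft_injective_of_surjective K K _ (Quotient.mk_surjective (s := s))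
  rw [← range_funLeft_quotient_mk, ← Submodule.map_comap_eq, LinearMap.ker_comp]
  exact (Submodule.equivMapOfInjective _ hinj _).finrank_eq.symm

theorem ncard_range_setOf_rel {ι : Type*} (s : Setoid ι) :
    (Set.range fun i => {j | s i j}).ncard = Nat.card (Quotient s) := by
  have hclasses : (Set.range fun i => {j | s i j}) = s.classes := by
    ext t
    simp only [Set.mem_range, Setoid.classes, Set.mem_ofPred_eq, eq_comm (a := t), s.comm']
  rw [hclasses, ← Nat.card_coe_set_eq, Nat.card_congr (Setoid.quotientEquivClasses s)]

def constraintMap (n : ℕ) : (Fin (n + 1) → ℝ) →ₗ[ℝ] ℝ × ℝ :=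
  (LinearMap.proj (Fin.last n)).prod (∑ i, LinearMap.proj i)

@[simp]
theorem constraintMap_apply {n : ℕ} (v : Fin (n + 1) → ℝ) :
    constraintMap n v = (v (Fin.last n), ∑ i, v i) := by
  simp [constraintMap]

theorem mem_U_iff_constraintMap {n : ℕ} {q : Fin (n + 1) → ℝ} :
    q ∈ U n ↔ constraintMap n q = (0, 1) := by
  rw [constraintMap_apply, Prod.mk.injEq, Fin.sum_univ_castSucc, U, Set.mem_ofPred_eq]
  constructor
  · rintro ⟨hlast, hsum⟩
    rw [hlast, hsum, add_zero]
    exact ⟨rfl, rfl⟩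
  · rintro ⟨hlast, hsum⟩
    rw [hlast, add_zero] at hsum
    exact ⟨hlast, hsum⟩

theorem constraintMap_comp_funLeft_surjective {n : ℕ} (s : Setoid (Fin (n + 1)))
    {i : Fin (n + 1)} (hi : ¬ s i (Fin.last n)) :
    Function.Surjective (constraintMap n ∘ₗ LinearMap.funLeft ℝ ℝ (Quotient.mk s)) := by
  classical
  set F := constraintMap n ∘ₗ LinearMap.funLeft ℝ ℝ (Quotient.mk s)
  have hsingle (c : Quotient s) : F (Pi.single c 1) =
      (if Quotient.mk s (Fin.last n) = c then 1 else 0, (#{j | Quotient.mk s j = c} : ℝ)) := by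
    simp [F, Pi.single_apply]
  set c₁ := Quotient.mk s (Fin.last n)
  set c₂ := Quotient.mk s i
  have hc : c₂ ≠ c₁ := fun h => hi (Quotient.exact h)
  have hk₂ : (#{j | Quotient.mk s j = c₂} : ℝ) ≠ 0 := by
    exact_mod_cast (Finset.card_pos.mpr ⟨i, by simp [c₂]⟩).ne'
  rintro ⟨a, b⟩
  refine ⟨a • Pi.single c₁ 1 +
    ((b - a * #{j | Quotient.mk s j = c₁}) / #{j | Quotient.mk s j = c₂}) • Pi.single c₂ 1, ?_⟩
  simp only [map_add, map_smul, hsingle, if_neg hc.symm, Prod.smul_mk, smul_eq_mul,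
    Prod.mk_add_mk]
  ext
  · simp
  · field_simp
    ring

theorem finrank_constAlong_inf_ker_constraintMap {n : ℕ} (s : Setoid (Fin (n + 1)))
    {i : Fin (n + 1)} (hi : ¬ s i (Fin.last n)) :
    Module.finrank ℝ (constAlong ℝ ℝ s ⊓ LinearMap.ker (constraintMap n) :
      Submodule ℝ (Fin (n + 1) → ℝ)) = Nat.card (Quotient s) - 2 := by
  have : Fintype (Quotient s) := Fintype.ofFinite _
  have hrank := LinearMap.finrank_range_add_finrank_ker
    (constraintMap n ∘ₗ LinearMap.funLeft ℝ ℝ (Quotient.mk s))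
  rw [LinearMap.range_eq_top.mpr (constraintMap_comp_funLeft_surjective s hi), finrank_top,
    Module.finrank_prod, Module.finrank_self, Module.finrank_pi, ← Nat.card_eq_fintype_card]
    at hrank
  rw [finrank_constAlong_inf_ker]
  omega

section Cell

variable {n : ℕ} {μ : Fin (n + 1) → Fin (n + 1) → ℕ} {p : Fin (n + 1) → ℝ}

theorem pEquiv.apply_eq {i j : Fin (n + 1)} (h : pEquiv μ p i j) : p i = p j := by
  induction h with
  | refl => rfl
  | tail _ hstep ih => exact ih.trans hstep.2

theorem pEquiv.symm (hsym : ∀ i j, μ i j = μ j i) {i j : Fin (n + 1)} (h : pEquiv μ p i j) :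
    pEquiv μ p j i := by
  induction h with
  | refl => exact .refl
  | tail _ hstep ih => exact .head ⟨hsym _ _ ▸ hstep.1, hstep.2.symm⟩ ih

variable (μ p) in
def pSetoid (hsym : ∀ i j, μ i j = μ j i) : Setoid (Fin (n + 1)) where
  r := pEquiv μ p
  iseqv := ⟨fun _ => .refl, pEquiv.symm hsym, .trans⟩

theorem mem_constAlong_of_mem_openCell {q : Fin (n + 1) → ℝ} (hq : q ∈ openCell μ p) :
    q ∈ constAlong ℝ ℝ (pEquiv μ p) := by
  intro i j h
  induction h with
  | refl => rfl
  | tail _ hstep ih => exact ih.trans ((hq.2 _ _ hstep.1).2.mpr hstep.2)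

theorem self_mem_openCell (hp : p ∈ U n) : p ∈ openCell μ p :=
  ⟨hp, fun _ _ _ => ⟨Iff.rfl, Iff.rfl⟩⟩

theorem exists_add_smul_mem_openCell (hp : p ∈ U n) {v : Fin (n + 1) → ℝ}
    (hv : v ∈ constAlong ℝ ℝ (pEquiv μ p) ⊓ LinearMap.ker (constraintMap n)) :
    ∃ ε : ℝ, 0 < ε ∧ p + ε • v ∈ openCell μ p := by
  obtain ⟨hconst, hker⟩ := hv
  obtain ⟨ε, hε, hlt⟩ := exists_pos_forall_lt_imp_add_mul_lt p v
  refine ⟨ε, hε, ?_, fun i j hij => ?_⟩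
  · rw [mem_U_iff_constraintMap] at hp ⊢
    rw [map_add, map_smul, LinearMap.mem_ker.mp hker, smul_zero, add_zero, hp]
  · exact lt_iff_lt_and_eq_iff_eq_of_imp (hlt i j) (hlt j i)
      (fun h => by simp [hconst i j (.single ⟨hij, h⟩), h])

theorem vectorSpan_openCell (hp : p ∈ U n) :
    vectorSpan ℝ (openCell μ p) =
      constAlong ℝ ℝ (pEquiv μ p) ⊓ LinearMap.ker (constraintMap n) := by
  apply le_antisymm
  · rw [vectorSpan_def, Submodule.span_le]
    rintro _ ⟨x, hx, y, hy, rfl⟩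
    refine ⟨sub_mem (mem_constAlong_of_mem_openCell hx) (mem_constAlong_of_mem_openCell hy), ?_⟩
    change constraintMap n (x - y) = 0
    rw [map_sub, mem_U_iff_constraintMap.mp hx.1, mem_U_iff_constraintMap.mp hy.1, sub_self]
  · intro v hv
    obtain ⟨ε, hε, hcell⟩ := exists_add_smul_mem_openCell hp hv
    have hdiff := vsub_mem_vectorSpan ℝ hcell (self_mem_openCell hp)
    rw [vsub_eq_sub, add_sub_cancel_left] at hdiff
    simpa [hε.ne'] using Submodule.smul_mem _ ε⁻¹ hdiff

end Cell

theorem stmt1_general {n : ℕ} (μ : Fin (n + 1) → Fin (n + 1) → ℕ)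
    (hsym : ∀ i j, μ i j = μ j i)
    (p : Fin (n + 1) → ℝ) (hp : p ∈ U n)
    (m : ℕ) (hm : m = (Set.range fun i : Fin (n + 1) => {j | pEquiv μ p i j}).ncard) :
    2 ≤ m ∧ Module.finrank ℝ (vectorSpan ℝ (openCell μ p)) = m - 2 := by
  set s := pSetoid μ p hsym
  have hcard : m = Nat.card (Quotient s) := hm.trans (ncard_range_setOf_rel s)
  obtain ⟨i, -, hi⟩ : ∃ i ∈ Finset.univ, p (Fin.castSucc i) ≠ 0 :=
    Finset.exists_ne_zero_of_sum_ne_zero (by rw [hp.2]; exact one_ne_zero)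
  have hsep : ¬ s i.castSucc (Fin.last n) := fun h => hi (h.apply_eq.trans hp.1)
  have : Nontrivial (Quotient s) := ⟨⟨_, _, fun h => hsep (Quotient.exact h)⟩⟩
  refine ⟨hcard ▸ Finite.one_lt_card, ?_⟩
  rw [vectorSpan_openCell hp, hcard]
  exact finrank_constAlong_inf_ker_constraintMap s hsep

/-- the dimension of the affine span of the open cell `C(p)` is `m - 2`,
where `m ≥ 2` is the number of equivalence classes of `∼_p`. -/
theorem stmt1 {n : ℕ} (hn : 1 ≤ n) (μ : Fin (n + 1) → Fin (n + 1) → ℕ)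
    (hsym : ∀ i j, μ i j = μ j i) (hloop : ∀ i, μ i i = 0)
    (hconn : ConnectedOn μ Set.univ)
    (p : Fin (n + 1) → ℝ) (hp : p ∈ U n)
    (m : ℕ) (hm : m = (Set.range fun i : Fin (n + 1) => {j | pEquiv μ p i j}).ncard) :
    2 ≤ m ∧ Module.finrank ℝ (vectorSpan ℝ (openCell μ p)) = m - 2 :=
  stmt1_general μ hsym p hp m hm
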